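/- arXiv:1404.1865 — 3 statements merged into one kernel-verified Lean document; each statement's English description precedes it below -/
import Mathlib

section
/- Let (V,g) be an n-dimensional real inner product space, R an algebraic curvature tensor on V with Ricci tensor Ric, and let h be a symmetric trace-free bilinear form on V. Denote by Ric_min the smallest eigenvalue of the Ricci endomorphism, and by K_max, K_min the maximum and minimum of the sectional curvatures of R. Then ⟨(Ric∘h + h∘Ric)/2 − R(h), h⟩ ≥ min{2·Ric_min − (n−2)·K_max, n·K_min}·‖h‖², where (R(h))_{ij} = R_{ikjl} h^{kl} and the inner products and norms are those induced by g. -/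
private lemma sum_comm3' {α β γ : Type*} [Fintype α] [Fintype β] [Fintype γ]
    (f : α → β → γ → ℝ) :
    ∑ a, ∑ b, ∑ c, f a b c = ∑ c, ∑ a, ∑ b, f a b c := by
  calc ∑ a, ∑ b, ∑ c, f a b c
      = ∑ a, ∑ c, ∑ b, f a b c := Finset.sum_congr rfl fun a _ => Finset.sum_comm
    _ = ∑ c, ∑ a, ∑ b, f a b c := Finset.sum_comm

private lemma sum_comm4' {α β γ δ : Type*} [Fintype α] [Fintype β] [Fintype γ] [Fintype δ]
    (f : α → β → γ → δ → ℝ) :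
    ∑ a, ∑ b, ∑ c, ∑ d, f a b c d = ∑ d, ∑ a, ∑ b, ∑ c, f a b c d := by
  have h1 : ∀ a, ∑ b, ∑ c, ∑ d, f a b c d = ∑ d, ∑ b, ∑ c, f a b c d :=
    fun a => sum_comm3' (f a)
  rw [Finset.sum_congr rfl fun a _ => h1 a, Finset.sum_comm]

private lemma sum_comm5' {α β γ δ ε : Type*} [Fintype α] [Fintype β] [Fintype γ] [Fintype δ]
    [Fintype ε] (f : α → β → γ → δ → ε → ℝ) :
    ∑ a, ∑ b, ∑ c, ∑ d, ∑ e, f a b c d e = ∑ e, ∑ a, ∑ b, ∑ c, ∑ d, f a b c d e := by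
  have h1 : ∀ a, ∑ b, ∑ c, ∑ d, ∑ e, f a b c d e = ∑ e, ∑ b, ∑ c, ∑ d, f a b c d e :=
    fun a => sum_comm4' (f a)
  rw [Finset.sum_congr rfl fun a _ => h1 a, Finset.sum_comm]

private lemma sum_comm6' {α β γ δ ε ζ : Type*} [Fintype α] [Fintype β] [Fintype γ] [Fintype δ]
    [Fintype ε] [Fintype ζ] (f : α → β → γ → δ → ε → ζ → ℝ) :
    ∑ a, ∑ b, ∑ c, ∑ d, ∑ e, ∑ x, f a b c d e x
      = ∑ x, ∑ a, ∑ b, ∑ c, ∑ d, ∑ e, f a b c d e x := by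
  have h1 : ∀ a, ∑ b, ∑ c, ∑ d, ∑ e, ∑ x, f a b c d e x
      = ∑ x, ∑ b, ∑ c, ∑ d, ∑ e, f a b c d e x := fun a => sum_comm5' (f a)
  rw [Finset.sum_congr rfl fun a _ => h1 a, Finset.sum_comm]

private lemma collapse' {n : ℕ} {G : Fin n → Fin n → ℝ}
    (hG : ∀ p q, G p q = if p = q then (1:ℝ) else 0)
    (F : Fin n → Fin n → ℝ) :
    ∑ p, ∑ q, G p q * F p q = ∑ p, F p p := by
  simp only [hG, ite_mul, one_mul, zero_mul]
  simp

private lemma collapse3 {n : ℕ} {u : Fin n → Fin n → ℝ}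
    (ortho : ∀ p q, (∑ i, u p i * u q i) = if p = q then (1:ℝ) else 0)
    (F : Fin n → Fin n → Fin n → Fin n → ℝ) :
    ∑ q, ∑ p, ∑ j, ∑ i, ∑ k, (u q j * u p j) * F q p i k
      = ∑ p, ∑ i, ∑ k, F p p i k := by
  have e : ∀ q p', ∑ j, ∑ i, ∑ k, (u q j * u p' j) * F q p' i k
      = (∑ j, u q j * u p' j) * (∑ i, ∑ k, F q p' i k) := by
    intro q p'
    rw [Finset.sum_mul]
    refine Finset.sum_congr rfl fun j _ => ?_
    rw [Finset.mul_sum]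
    refine Finset.sum_congr rfl fun i _ => ?_
    rw [Finset.mul_sum]
  rw [Finset.sum_congr rfl fun q _ => Finset.sum_congr rfl fun p' _ => e q p']
  exact collapse' ortho _

open Matrix in
private lemma real_spectral (n : ℕ) (h : Fin n → Fin n → ℝ) (hsym : ∀ i j, h i j = h j i) :
    ∃ (u : Fin n → Fin n → ℝ) (lam : Fin n → ℝ),
      (∀ p q, (∑ i, u p i * u q i) = if p = q then (1:ℝ) else 0) ∧
      (∀ i j, (∑ p, u p i * u p j) = if i = j then (1:ℝ) else 0) ∧
      (∀ i j, h i j = ∑ p, lam p * u p i * u p j) := by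
  classical
  set A : Matrix (Fin n) (Fin n) ℝ := Matrix.of h with hA
  have hherm : A.IsHermitian := by
    ext i j
    simp [hA, Matrix.conjTranspose, hsym i j]
  set U : Matrix (Fin n) (Fin n) ℝ := (hherm.eigenvectorUnitary : Matrix (Fin n) (Fin n) ℝ)
  refine ⟨fun p i => U i p, hherm.eigenvalues, ?_, ?_, ?_⟩
  · intro p q
    have h1 : star U * U = 1 := Matrix.mem_unitaryGroup_iff'.mp hherm.eigenvectorUnitary.2
    have := congrFun (congrFun h1 p) q
    simpa [Matrix.mul_apply, Matrix.one_apply, mul_comm] using this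
  · intro i j
    have h1 : U * star U = 1 := Matrix.mem_unitaryGroup_iff.mp hherm.eigenvectorUnitary.2
    have := congrFun (congrFun h1 i) j
    simpa [Matrix.mul_apply, Matrix.one_apply] using this
  · intro i j
    have := hherm.spectral_theorem
    have h2 := congrFun (congrFun this i) j
    simp [Matrix.mul_apply, Matrix.diagonal_apply, Finset.sum_ite_eq, hA] at h2
    rw [h2]
    refine Finset.sum_congr rfl fun p _ => ?_
    show _ = hherm.eigenvalues p * hherm.eigenvectorBasis p i * hherm.eigenvectorBasis p j
    ring

set_option maxHeartbeats 2000000 in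
/- STATEMENT 0: Fujitani-type eigenvalue lower bound for the curvature operator
   Ric ∘ h − Riem(h) on trace-free symmetric bilinear forms.
   We work in components with respect to an orthonormal basis of the inner
   product space (V,g), so V = ℝⁿ and g = δ. -/
theorem ricci_minus_riemann_lower_bound
    (n : ℕ) (hn : 2 ≤ n)
    (R : Fin n → Fin n → Fin n → Fin n → ℝ)
    -- algebraic curvature tensor symmetries
    (hR1 : ∀ i j k l, R i j k l = - R j i k l)
    (hR2 : ∀ i j k l, R i j k l = - R i j l k)
    (hR3 : ∀ i j k l, R i j k l = R k l i j)
    (hBianchi : ∀ i j k l, R i j k l + R i k l j + R i l j k = 0)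
    -- Ricci tensor of R
    (Ric : Fin n → Fin n → ℝ)
    (hRic : ∀ i j, Ric i j = ∑ k, R k i k j)
    -- h : symmetric, trace-free bilinear form
    (h : Fin n → Fin n → ℝ)
    (hsym : ∀ i j, h i j = h j i)
    (htf : ∑ i, h i i = 0)
    -- Ric_min : smallest eigenvalue of the Ricci endomorphism
    (RicMin : ℝ)
    (hRicMin : ∀ v : Fin n → ℝ,
      RicMin * (∑ i, v i ^ 2) ≤ ∑ i, ∑ j, Ric i j * v i * v j)
    (hRicMinAttained : ∃ v : Fin n → ℝ, (∑ i, v i ^ 2) = 1 ∧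
      (∑ i, ∑ j, Ric i j * v i * v j) = RicMin)
    -- K_max, K_min : max and min of the sectional curvatures
    (Kmax Kmin : ℝ)
    (hK : ∀ e f : Fin n → ℝ, (∑ i, e i ^ 2) = 1 → (∑ i, f i ^ 2) = 1 →
      (∑ i, e i * f i) = 0 →
      Kmin ≤ (∑ i, ∑ j, ∑ k, ∑ l, R i j k l * e i * f j * e k * f l) ∧
      (∑ i, ∑ j, ∑ k, ∑ l, R i j k l * e i * f j * e k * f l) ≤ Kmax) :
    min (2 * RicMin - ((n : ℝ) - 2) * Kmax) ((n : ℝ) * Kmin)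
        * (∑ i, ∑ j, (h i j) ^ 2)
      ≤ ∑ i, ∑ j,
          ((1 / 2) * (∑ k, (Ric i k * h k j + Ric j k * h k i))
            - ∑ k, ∑ l, R i k j l * h k l) * h i j := by
  classical
  obtain ⟨u, lam, ortho, compl, hdiag⟩ := real_spectral n h hsym
  set K : Fin n → Fin n → ℝ :=
    fun p q => ∑ a, ∑ b, ∑ c, ∑ d, R a b c d * u p a * u q b * u p c * u q d with hKdef
  -- trace of lam is zero
  have trlam : ∑ p, lam p = 0 := by
    have e : ∀ p, ∑ i, lam p * u p i * u p i = lam p := by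
      intro p
      have e1 : ∀ i, lam p * u p i * u p i = lam p * (u p i * u p i) := fun i => by ring
      rw [Finset.sum_congr rfl fun i _ => e1 i, ← Finset.mul_sum, ortho p p]
      simp
    calc ∑ p, lam p = ∑ p, ∑ i, lam p * u p i * u p i :=
          Finset.sum_congr rfl fun p _ => (e p).symm
      _ = ∑ i, ∑ p, lam p * u p i * u p i := Finset.sum_comm
      _ = ∑ i, h i i := Finset.sum_congr rfl fun i _ => (hdiag i i).symm
      _ = 0 := htf
  -- norm of h
  have norm2 : ∑ i, ∑ j, (h i j) ^ 2 = ∑ p, (lam p) ^ 2 := by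
    calc ∑ i, ∑ j, (h i j) ^ 2
        = ∑ i, ∑ j, ∑ p, ∑ q, (lam p * u p i * u p j) * (lam q * u q i * u q j) := by
          refine Finset.sum_congr rfl fun i _ => Finset.sum_congr rfl fun j _ => ?_
          rw [hdiag, sq, Finset.sum_mul_sum]
      _ = ∑ q, ∑ i, ∑ j, ∑ p, (lam p * u p i * u p j) * (lam q * u q i * u q j) :=
          sum_comm4' _
      _ = ∑ p, ∑ q, ∑ i, ∑ j, (lam p * u p i * u p j) * (lam q * u q i * u q j) :=
          sum_comm4' _
      _ = ∑ p, ∑ q, (∑ i, u p i * u q i) * (lam p * lam q * (∑ j, u p j * u q j)) := by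
          refine Finset.sum_congr rfl fun p _ => Finset.sum_congr rfl fun q _ => ?_
          rw [Finset.mul_sum, Finset.sum_mul_sum]
          exact Finset.sum_congr rfl fun i _ => Finset.sum_congr rfl fun j _ => by ring
      _ = ∑ p, lam p * lam p * (∑ j, u p j * u p j) := collapse' ortho _
      _ = ∑ p, (lam p) ^ 2 := by
          refine Finset.sum_congr rfl fun p _ => ?_
          rw [ortho p p]
          simp [sq]
  -- symmetry of K
  have Ksym : ∀ p q, K p q = K q p := by
    intro p q
    calc K p q = ∑ a, ∑ b, ∑ c, ∑ d, R a b c d * u p a * u q b * u p c * u q d := rfl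
      _ = ∑ b, ∑ a, ∑ c, ∑ d, R a b c d * u p a * u q b * u p c * u q d := Finset.sum_comm
      _ = ∑ b, ∑ a, ∑ d, ∑ c, R a b c d * u p a * u q b * u p c * u q d :=
          Finset.sum_congr rfl fun b _ => Finset.sum_congr rfl fun a _ => Finset.sum_comm
      _ = K q p := by
          refine Finset.sum_congr rfl fun a _ => Finset.sum_congr rfl fun b _ =>
            Finset.sum_congr rfl fun c _ => Finset.sum_congr rfl fun d _ => ?_
          have e : R b a d c = R a b c d := by rw [hR1 b a d c, hR2 a b d c, neg_neg]
          rw [e]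
          ring
  -- off-diagonal lower bound
  have Koff : ∀ p q, p ≠ q → Kmin ≤ K q p := by
    intro p q hpq
    have e1 : ∑ i, (u q i) ^ 2 = 1 := by
      have := ortho q q
      rw [if_pos rfl] at this
      simpa [sq] using this
    have f1 : ∑ i, (u p i) ^ 2 = 1 := by
      have := ortho p p
      rw [if_pos rfl] at this
      simpa [sq] using this
    have e0 : ∑ i, u q i * u p i = 0 := by
      have := ortho q p
      rwa [if_neg (Ne.symm hpq)] at this
    exact (hK (u q) (u p) e1 f1 e0).1
  -- Ricci quadratic form in eigenbasis
  have RicQ : ∀ p, (∑ a, ∑ b, Ric a b * u p a * u p b) = ∑ q, K q p := by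
    intro p
    have target : ∑ q, K q p = ∑ k, ∑ a, ∑ b, R k a k b * u p a * u p b := by
      calc ∑ q, K q p
          = ∑ q, ∑ a, ∑ b, ∑ c, ∑ d, R a b c d * u q a * u p b * u q c * u p d := rfl
        _ = ∑ a, ∑ b, ∑ c, ∑ d, ∑ q, R a b c d * u q a * u p b * u q c * u p d :=
            (sum_comm5' _).symm
        _ = ∑ a, ∑ c, ∑ b, ∑ d, ∑ q, R a b c d * u q a * u p b * u q c * u p d :=
            Finset.sum_congr rfl fun a _ => Finset.sum_comm
        _ = ∑ a, ∑ c, ∑ q, ∑ b, ∑ d, R a b c d * u q a * u p b * u q c * u p d :=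
            Finset.sum_congr rfl fun a _ => Finset.sum_congr rfl fun c _ => sum_comm3' _
        _ = ∑ a, ∑ c, (∑ q, u q a * u q c) * (∑ b, ∑ d, R a b c d * u p b * u p d) := by
            refine Finset.sum_congr rfl fun a _ => Finset.sum_congr rfl fun c _ => ?_
            rw [Finset.sum_mul]
            refine Finset.sum_congr rfl fun q _ => ?_
            rw [Finset.mul_sum]
            refine Finset.sum_congr rfl fun b _ => ?_
            rw [Finset.mul_sum]
            exact Finset.sum_congr rfl fun d _ => by ring
        _ = ∑ a, ∑ b, ∑ d, R a b a d * u p b * u p d := collapse' compl _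
        _ = ∑ k, ∑ a, ∑ b, R k a k b * u p a * u p b := rfl
    rw [target]
    calc ∑ a, ∑ b, Ric a b * u p a * u p b
        = ∑ a, ∑ b, ∑ k, R k a k b * u p a * u p b := by
          refine Finset.sum_congr rfl fun a _ => Finset.sum_congr rfl fun b _ => ?_
          rw [hRic a b, Finset.sum_mul, Finset.sum_mul]
      _ = ∑ k, ∑ a, ∑ b, R k a k b * u p a * u p b := sum_comm3' _
  -- claim A
  have claimA : ∑ i, ∑ j, (∑ k, Ric i k * h k j) * h i j
      = ∑ p, (lam p) ^ 2 * (∑ a, ∑ b, Ric a b * u p a * u p b) := by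
    calc ∑ i, ∑ j, (∑ k, Ric i k * h k j) * h i j
        = ∑ i, ∑ j, ∑ k, ∑ q, ∑ p,
            (Ric i k * (lam p * u p k * u p j)) * (lam q * u q i * u q j) := by
          refine Finset.sum_congr rfl fun i _ => Finset.sum_congr rfl fun j _ => ?_
          rw [Finset.sum_mul]
          refine Finset.sum_congr rfl fun k _ => ?_
          rw [hdiag k j, hdiag i j, Finset.mul_sum]
          refine Finset.sum_congr rfl fun q _ => ?_
          rw [Finset.mul_sum, Finset.sum_mul]
      _ = ∑ p, ∑ i, ∑ j, ∑ k, ∑ q,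
            (Ric i k * (lam p * u p k * u p j)) * (lam q * u q i * u q j) :=
          sum_comm5' _
      _ = ∑ q, ∑ p, ∑ i, ∑ j, ∑ k,
            (Ric i k * (lam p * u p k * u p j)) * (lam q * u q i * u q j) :=
          sum_comm5' _
      _ = ∑ q, ∑ p, ∑ j, ∑ i, ∑ k,
            (Ric i k * (lam p * u p k * u p j)) * (lam q * u q i * u q j) :=
          Finset.sum_congr rfl fun q _ => Finset.sum_congr rfl fun p _ => Finset.sum_comm
      _ = ∑ q, ∑ p, ∑ j, ∑ i, ∑ k,
            (u q j * u p j) * (lam p * lam q * (Ric i k * u q i * u p k)) := by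
          refine Finset.sum_congr rfl fun q _ => Finset.sum_congr rfl fun p _ =>
            Finset.sum_congr rfl fun j _ => Finset.sum_congr rfl fun i _ =>
            Finset.sum_congr rfl fun k _ => ?_
          ring
      _ = ∑ p, ∑ i, ∑ k, lam p * lam p * (Ric i k * u p i * u p k) := collapse3 ortho _
      _ = ∑ p, (lam p) ^ 2 * (∑ a, ∑ b, Ric a b * u p a * u p b) := by
          refine Finset.sum_congr rfl fun p _ => ?_
          rw [Finset.mul_sum]
          refine Finset.sum_congr rfl fun a _ => ?_
          rw [Finset.mul_sum]
          refine Finset.sum_congr rfl fun b _ => ?_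
          ring
  -- claim B
  have claimB : ∑ i, ∑ j, (∑ k, ∑ l, R i k j l * h k l) * h i j
      = ∑ p, ∑ q, lam p * lam q * K q p := by
    calc ∑ i, ∑ j, (∑ k, ∑ l, R i k j l * h k l) * h i j
        = ∑ i, ∑ j, ∑ k, ∑ l, ∑ q, ∑ p,
            (R i k j l * (lam p * u p k * u p l)) * (lam q * u q i * u q j) := by
          refine Finset.sum_congr rfl fun i _ => Finset.sum_congr rfl fun j _ => ?_
          rw [Finset.sum_mul]
          refine Finset.sum_congr rfl fun k _ => ?_
          rw [Finset.sum_mul]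
          refine Finset.sum_congr rfl fun l _ => ?_
          rw [hdiag k l, hdiag i j, Finset.mul_sum]
          refine Finset.sum_congr rfl fun q _ => ?_
          rw [Finset.mul_sum, Finset.sum_mul]
      _ = ∑ p, ∑ i, ∑ j, ∑ k, ∑ l, ∑ q,
            (R i k j l * (lam p * u p k * u p l)) * (lam q * u q i * u q j) :=
          sum_comm6' _
      _ = ∑ q, ∑ p, ∑ i, ∑ j, ∑ k, ∑ l,
            (R i k j l * (lam p * u p k * u p l)) * (lam q * u q i * u q j) :=
          sum_comm6' _
      _ = ∑ p, ∑ q, ∑ i, ∑ j, ∑ k, ∑ l,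
            (R i k j l * (lam p * u p k * u p l)) * (lam q * u q i * u q j) :=
          Finset.sum_comm
      _ = ∑ p, ∑ q, lam p * lam q * K q p := by
          refine Finset.sum_congr rfl fun p _ => Finset.sum_congr rfl fun q _ => ?_
          simp only [hKdef]
          rw [Finset.mul_sum]
          refine Finset.sum_congr rfl fun i _ => ?_
          rw [show (∑ j, ∑ k, ∑ l,
              (R i k j l * (lam p * u p k * u p l)) * (lam q * u q i * u q j))
            = ∑ k, ∑ j, ∑ l,
              (R i k j l * (lam p * u p k * u p l)) * (lam q * u q i * u q j)
            from Finset.sum_comm, Finset.mul_sum]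
          refine Finset.sum_congr rfl fun k _ => ?_
          rw [Finset.mul_sum]
          refine Finset.sum_congr rfl fun j _ => ?_
          rw [Finset.mul_sum]
          refine Finset.sum_congr rfl fun l _ => ?_
          ring
  -- total RHS
  have claimQ : ∑ i, ∑ j,
        ((1 / 2) * (∑ k, (Ric i k * h k j + Ric j k * h k i))
          - ∑ k, ∑ l, R i k j l * h k l) * h i j
      = ∑ p, ∑ q, ((lam p)^2 - lam p * lam q) * K q p := by
    have hswap : ∑ i, ∑ j, (∑ k, Ric j k * h k i) * h i j
        = ∑ i, ∑ j, (∑ k, Ric i k * h k j) * h i j := by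
      rw [Finset.sum_comm]
      refine Finset.sum_congr rfl fun i _ => Finset.sum_congr rfl fun j _ => ?_
      rw [hsym j i]
    have hA2 : ∑ i, ∑ j, (∑ k, Ric i k * h k j) * h i j
        = ∑ p, ∑ q, (lam p)^2 * K q p := by
      rw [claimA]
      refine Finset.sum_congr rfl fun p _ => ?_
      rw [RicQ p, Finset.mul_sum]
    have split : ∀ i j, ((1 / 2) * (∑ k, (Ric i k * h k j + Ric j k * h k i))
          - ∑ k, ∑ l, R i k j l * h k l) * h i j
        = (1/2) * ((∑ k, Ric i k * h k j) * h i j)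
          + (1/2) * ((∑ k, Ric j k * h k i) * h i j)
          - (∑ k, ∑ l, R i k j l * h k l) * h i j := by
      intro i j
      rw [Finset.sum_add_distrib]
      ring
    calc ∑ i, ∑ j, ((1 / 2) * (∑ k, (Ric i k * h k j + Ric j k * h k i))
            - ∑ k, ∑ l, R i k j l * h k l) * h i j
        = ∑ i, ∑ j, ((1/2) * ((∑ k, Ric i k * h k j) * h i j)
            + (1/2) * ((∑ k, Ric j k * h k i) * h i j)
            - (∑ k, ∑ l, R i k j l * h k l) * h i j) :=
          Finset.sum_congr rfl fun i _ => Finset.sum_congr rfl fun j _ => split i j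
      _ = (1/2) * (∑ i, ∑ j, (∑ k, Ric i k * h k j) * h i j)
            + (1/2) * (∑ i, ∑ j, (∑ k, Ric j k * h k i) * h i j)
            - (∑ i, ∑ j, (∑ k, ∑ l, R i k j l * h k l) * h i j) := by
          simp only [Finset.sum_add_distrib, Finset.sum_sub_distrib, Finset.mul_sum]
      _ = (1/2) * (∑ p, ∑ q, (lam p)^2 * K q p)
            + (1/2) * (∑ p, ∑ q, (lam p)^2 * K q p)
            - ∑ p, ∑ q, lam p * lam q * K q p := by
          rw [hswap, hA2, claimB]
      _ = (∑ p, ∑ q, (lam p)^2 * K q p) - ∑ p, ∑ q, lam p * lam q * K q p := by ring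
      _ = ∑ p, ∑ q, ((lam p)^2 - lam p * lam q) * K q p := by
          rw [← Finset.sum_sub_distrib]
          refine Finset.sum_congr rfl fun p _ => ?_
          rw [← Finset.sum_sub_distrib]
          exact Finset.sum_congr rfl fun q _ => by ring
  -- symmetrized form
  have claimS : ∑ p, ∑ q, ((lam p)^2 - lam p * lam q) * K q p
      = (1/2) * ∑ p, ∑ q, (lam p - lam q)^2 * K q p := by
    have swapS : ∑ p, ∑ q, ((lam p)^2 - lam p * lam q) * K q p
        = ∑ p, ∑ q, ((lam q)^2 - lam p * lam q) * K q p := by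
      rw [Finset.sum_comm]
      refine Finset.sum_congr rfl fun p _ => Finset.sum_congr rfl fun q _ => ?_
      rw [Ksym p q]
      ring
    have hsum : (∑ p, ∑ q, ((lam p)^2 - lam p * lam q) * K q p)
        + ∑ p, ∑ q, ((lam p)^2 - lam p * lam q) * K q p
        = ∑ p, ∑ q, (lam p - lam q)^2 * K q p := by
      nth_rewrite 2 [swapS]
      rw [← Finset.sum_add_distrib]
      refine Finset.sum_congr rfl fun p _ => ?_
      rw [← Finset.sum_add_distrib]
      exact Finset.sum_congr rfl fun q _ => by ring
    rw [← hsum]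
    ring
  -- lower bound
  have lbound : (n : ℝ) * Kmin * (∑ p, (lam p)^2)
      ≤ (1/2) * ∑ p, ∑ q, (lam p - lam q)^2 * K q p := by
    have tb : ∀ p q : Fin n, (lam p - lam q)^2 * Kmin ≤ (lam p - lam q)^2 * K q p := by
      intro p q
      by_cases hpq : p = q
      · subst hpq; simp
      · exact mul_le_mul_of_nonneg_left (Koff p q hpq) (sq_nonneg _)
    have sumb : ∑ p, ∑ q, (lam p - lam q)^2 * Kmin ≤ ∑ p, ∑ q, (lam p - lam q)^2 * K q p :=
      Finset.sum_le_sum fun p _ => Finset.sum_le_sum fun q _ => tb p q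
    have inner : ∀ p, ∑ q, (lam p - lam q)^2 * Kmin
        = (n:ℝ) * ((lam p)^2 * Kmin) + (∑ q, (lam q)^2) * Kmin := by
      intro p
      have e : ∀ q, (lam p - lam q)^2 * Kmin
          = ((lam p)^2 * Kmin + (lam q)^2 * Kmin) - 2 * lam p * Kmin * lam q := fun q => by ring
      rw [Finset.sum_congr rfl fun q _ => e q, Finset.sum_sub_distrib, Finset.sum_add_distrib]
      have t1 : ∑ _q : Fin n, ((lam p)^2 * Kmin) = (n:ℝ) * ((lam p)^2 * Kmin) := by
        rw [Finset.sum_const, Finset.card_univ, Fintype.card_fin, nsmul_eq_mul]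
      have t2 : ∑ q : Fin n, (lam q)^2 * Kmin = (∑ q, (lam q)^2) * Kmin :=
        (Finset.sum_mul _ _ _).symm
      have t3 : ∑ q : Fin n, 2 * lam p * Kmin * lam q = 0 := by
        rw [← Finset.mul_sum, trlam, mul_zero]
      rw [t1, t2, t3, sub_zero]
    have comp : ∑ p, ∑ q, (lam p - lam q)^2 * Kmin
        = 2 * (n:ℝ) * Kmin * ∑ p, (lam p)^2 := by
      rw [Finset.sum_congr rfl fun p _ => inner p, Finset.sum_add_distrib]
      have c1 : ∑ p : Fin n, (n:ℝ) * ((lam p)^2 * Kmin)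
          = (n:ℝ) * ((∑ p, (lam p)^2) * Kmin) := by
        rw [← Finset.mul_sum, ← Finset.sum_mul]
      have c2 : ∑ _p : Fin n, (∑ q, (lam q)^2) * Kmin
          = (n:ℝ) * ((∑ q, (lam q)^2) * Kmin) := by
        rw [Finset.sum_const, Finset.card_univ, Fintype.card_fin, nsmul_eq_mul]
      rw [c1, c2]
      ring
    have e2 : (n:ℝ) * Kmin * (∑ p, (lam p)^2)
        = (1/2) * ∑ p, ∑ q, (lam p - lam q)^2 * Kmin := by
      rw [comp]
      ring
    rw [e2]
    exact mul_le_mul_of_nonneg_left sumb (by norm_num)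
  have hNnn : (0:ℝ) ≤ ∑ i, ∑ j, (h i j) ^ 2 :=
    Finset.sum_nonneg fun i _ => Finset.sum_nonneg fun j _ => sq_nonneg _
  calc min (2 * RicMin - ((n : ℝ) - 2) * Kmax) ((n : ℝ) * Kmin) * (∑ i, ∑ j, (h i j) ^ 2)
      ≤ (n : ℝ) * Kmin * (∑ i, ∑ j, (h i j) ^ 2) :=
        mul_le_mul_of_nonneg_right (min_le_right _ _) hNnn
    _ = (n : ℝ) * Kmin * (∑ p, (lam p)^2) := by rw [norm2]
    _ ≤ (1/2) * ∑ p, ∑ q, (lam p - lam q)^2 * K q p := lbound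
    _ = ∑ p, ∑ q, ((lam p)^2 - lam p * lam q) * K q p := claimS.symm
    _ = _ := claimQ.symm
end

section
/- Let (M,g) be a Riemannian manifold with parallel Ricci curvature and nondegenerate Ricci tensor (Ric invertible as an endomorphism). If g + h is a metric solving Ric(g+h) = R(h) + 𝓛_g(Ric_g^{-1} B_{g+h}(R(h))) with B_{g+h}(Ric(g+h)) = 0 (the contracted second Bianchi identity), then the 1-form ω = Ric_g^{-1} B_{g+h}(R(h)) satisfies B_{g+h}(𝓛_g ω) + Ric_g(ω) = 0. -/
/- STATEMENT 12: if g + h solves the gauged equation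
   Ric(g+h) = R(h) + 𝓛_g(Ric_g⁻¹ B_{g+h}(R(h))) and B_{g+h}(Ric(g+h)) = 0
   (contracted second Bianchi identity), then ω = Ric_g⁻¹ B_{g+h}(R(h))
   satisfies B_{g+h}(𝓛_g ω) + Ric_g(ω) = 0.
   The space of symmetric 2-tensor fields S2F, the space of 1-forms OneF, the
   Bianchi operator B = B_{g+h} (linear in its tensor argument), the Killing
   operator 𝓛 = 𝓛_g, and the Ricci endomorphism Ric_g with inverse RicInv are
   abstracted; Nondegeneracy of Ric(g) is encoded by the two-sided inverse. -/
theorem gauge_one_form_satisfies_P_equation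
    (S2F OneF : Type*)
    [AddCommGroup S2F] [Module ℝ S2F] [AddCommGroup OneF] [Module ℝ OneF]
    (B : S2F →ₗ[ℝ] OneF)          -- the Bianchi operator B_{g+h}
    (𝓛 : OneF → S2F)              -- the Killing operator 𝓛_g
    (RicEnd RicInv : OneF →ₗ[ℝ] OneF)
    (hinv₁ : ∀ ω, RicEnd (RicInv ω) = ω)
    (hinv₂ : ∀ ω, RicInv (RicEnd ω) = ω)
    (RicGH : S2F)                  -- Ric(g+h)
    (Rh : S2F)                     -- R(h)
    -- contracted second Bianchi identity for g + h
    (hBianchi : B RicGH = 0)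
    -- the gauged equation Ric(g+h) = R(h) + 𝓛_g(Ric_g⁻¹ B_{g+h}(R(h)))
    (heq : RicGH = Rh + 𝓛 (RicInv (B Rh))) :
    B (𝓛 (RicInv (B Rh))) + RicEnd (RicInv (B Rh)) = 0 := by
  have := hBianchi
  rw [heq, map_add] at this
  rw [hinv₁]
  linear_combination (norm := abel) this
end

section
/- Let (M,g) be a compact Riemannian manifold, n = dim M, κ ≠ −1/n and Λ real constants, and suppose g is Einstein with Ein(g) = τ g where Ein(g) = Ric(g) + κR(g)g + Λg. The operator 𝓟h = (Δ_L + 2κR(g) + 2Λ)h + (κ/(n(1+κn)))[(n−2)Δ(Tr_g h) − 2nτ Tr_g h] g preserves the splitting S₂ = 𝓖 ⊕ S̊₂ into pure-trace and trace-free parts: for a function u and trace-free h̊, 𝓟(ug + h̊) = (1/(1+κn)) p(u) g + P̊(h̊), where p(u) = (1+2(n−1)κ)Δu + 2Λu and P̊(h̊) = [Δ_L + 2κR(g) + 2Λ] h̊. -/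
/- STATEMENT 16: for g Einstein with Ein(g) = τg, the operator
   𝓟h = (Δ_L + 2κR(g) + 2Λ)h + (κ/(n(1+κn)))[(n−2)Δ(Tr_g h) − 2nτ Tr_g h] g
   preserves the splitting S₂ = 𝓖 ⊕ S̊₂:
   𝓟(ug + h̊) = (1/(1+κn)) p(u) g + P̊(h̊) with
   p(u) = (1+2(n−1)κ)Δu + 2Λu and P̊(h̊) = [Δ_L + 2κR(g) + 2Λ]h̊.
   Components in an orthonormal frame (g = δ); the Lichnerowicz Laplacian ΔL
   and the function Laplacian Δf are abstracted, with Tr ∘ Δ_L = Δ ∘ Tr and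
   Δ_L(ug) = (Δu)g. -/
theorem P_operator_preserves_splitting
    (n : ℕ) (hn : 0 < n) (M : Type*)
    (κ Λ τ Scal : ℝ) (hκ : 1 + κ * (n : ℝ) ≠ 0)
    -- g Einstein with Ein(g) = τ g : Ric = (Scal/n) g and
    (hτ : τ = Scal / (n : ℝ) + κ * Scal + Λ)
    (ΔL : (M → Fin n → Fin n → ℝ) →ₗ[ℝ] (M → Fin n → Fin n → ℝ))
    (Δf : (M → ℝ) →ₗ[ℝ] (M → ℝ))
    -- Tr ∘ Δ_L = Δ ∘ Tr
    (hTr : ∀ (u : M → Fin n → Fin n → ℝ) (x : M),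
      (∑ i, ΔL u x i i) = Δf (fun y => ∑ i, u y i i) x)
    -- Δ_L preserves pure-trace tensors: Δ_L(ug) = (Δu)g
    (hpure : ∀ (u : M → ℝ) (x : M) (i j : Fin n),
      ΔL (fun y a b => u y * (if a = b then (1:ℝ) else 0)) x i j
        = Δf u x * (if i = j then (1:ℝ) else 0)) :
    ∀ (u : M → ℝ) (h : M → Fin n → Fin n → ℝ),
      (∀ x, (∑ i, h x i i) = 0) →
      ∀ x i j,
        -- 𝓟(u g + h̊)
        (ΔL (fun y a b => u y * (if a = b then (1:ℝ) else 0) + h y a b) x i j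
          + (2 * κ * Scal + 2 * Λ)
              * (u x * (if i = j then (1:ℝ) else 0) + h x i j)
          + (κ / ((n : ℝ) * (1 + κ * (n : ℝ))))
              * (((n : ℝ) - 2)
                    * Δf (fun y => ∑ a,
                        (u y * (if a = a then (1:ℝ) else 0) + h y a a)) x
                  - 2 * (n : ℝ) * τ
                    * (∑ a, (u x * (if a = a then (1:ℝ) else 0) + h x a a)))
              * (if i = j then (1:ℝ) else 0))
        -- = (1/(1+κn)) p(u) g + P̊(h̊)
        = (1 / (1 + κ * (n : ℝ)))
            * ((1 + 2 * ((n : ℝ) - 1) * κ) * Δf u x + 2 * Λ * u x)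
            * (if i = j then (1:ℝ) else 0)
          + (ΔL h x i j + (2 * κ * Scal + 2 * Λ) * h x i j) := by
  intro u h h0 x i j
  have hn' : (n : ℝ) ≠ 0 := Nat.cast_ne_zero.mpr hn.ne'
  -- split ΔL by linearity
  have harg : (fun y a b => u y * (if a = b then (1:ℝ) else 0) + h y a b)
      = (fun y a b => u y * (if a = b then (1:ℝ) else 0)) + h := rfl
  have hsplit : ΔL (fun y a b => u y * (if a = b then (1:ℝ) else 0) + h y a b) x i j
      = Δf u x * (if i = j then (1:ℝ) else 0) + ΔL h x i j := by
    rw [harg, map_add]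
    simp only [Pi.add_apply]
    rw [hpure u x i j]
  -- trace function simplifies
  have htrace : (fun y => ∑ a, (u y * (if a = a then (1:ℝ) else 0) + h y a a))
      = (n : ℝ) • u := by
    funext y
    simp [Finset.sum_add_distrib, h0 y, mul_comm]
  have hΔtr : Δf (fun y => ∑ a, (u y * (if a = a then (1:ℝ) else 0) + h y a a)) x
      = (n : ℝ) * Δf u x := by
    rw [htrace, map_smul]; rfl
  have htr2 : (∑ a, (u x * (if a = a then (1:ℝ) else 0) + h x a a)) = (n : ℝ) * u x := by
    simp [Finset.sum_add_distrib, h0 x, mul_comm]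
  rw [hsplit, hΔtr, htr2, hτ]
  rcases eq_or_ne i j with hij | hij
  · simp only [hij, if_pos rfl]
    field_simp
    ring
  · simp only [if_neg hij]
    ring
end
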